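/- Let D be a binary q-analog of the Fano plane and let A in GL(7, F_2) be an automorphism of D with A² = 1 and A ≠ 1. Then A is conjugate in GL(7, F_2) to the matrix A_{7,3}, i.e., the 7×7 block diagonal matrix with three consecutive 2×2 blocks [[0,1],[1,0]] followed by a 1×1 identity block. -/

import Mathlib

/-- The space `F_2^v` of binary row vectors of length `v`. -/
abbrev BinVec (v : ℕ) := Fin v → ZMod 2

/-- The image `U·A` of a subspace `U` of `F_2^v` under the linear map `x ↦ x·A`
given by the matrix `A`. -/
def subApply (v : ℕ) (A : Matrix (Fin v) (Fin v) (ZMod 2))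
    (U : Submodule (ZMod 2) (BinVec v)) : Submodule (ZMod 2) (BinVec v) :=
  U.map (Matrix.vecMulLinear A)

/-- A binary `q`-Steiner triple system `S_2[2,3,v]`: a set of `3`-dimensional
subspaces (blocks) of `F_2^v` such that every `2`-dimensional subspace is
contained in exactly one block. -/
def IsSteinerTriple (v : ℕ) (D : Set (Submodule (ZMod 2) (BinVec v))) : Prop :=
  (∀ B ∈ D, Module.finrank (ZMod 2) B = 3) ∧
  ∀ T : Submodule (ZMod 2) (BinVec v), Module.finrank (ZMod 2) T = 2 →
    ∃! B, B ∈ D ∧ T ≤ B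

/-- The matrix `A` is an automorphism of `D`: `U ↦ U·A` maps `D` onto itself. -/
def IsAutM (v : ℕ) (A : Matrix (Fin v) (Fin v) (ZMod 2))
    (D : Set (Submodule (ZMod 2) (BinVec v))) : Prop :=
  subApply v A '' D = D

lemma subApply_one (v : ℕ) (U : Submodule (ZMod 2) (BinVec v)) :
    subApply v 1 U = U := by
  have h : Matrix.vecMulLinear (1 : Matrix (Fin v) (Fin v) (ZMod 2)) = LinearMap.id := by
    refine LinearMap.ext fun x => ?_
    simp [Matrix.vecMulLinear_apply]
  simp [subApply, h]

lemma subApply_mul (v : ℕ) (A B : Matrix (Fin v) (Fin v) (ZMod 2))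
    (U : Submodule (ZMod 2) (BinVec v)) :
    subApply v (A * B) U = subApply v B (subApply v A U) := by
  have h : Matrix.vecMulLinear (A * B) =
      (Matrix.vecMulLinear B).comp (Matrix.vecMulLinear A) := LinearMap.ext fun x => by
    simp only [Matrix.vecMulLinear_apply, LinearMap.coe_comp, Function.comp_apply]
    exact (Matrix.vecMul_vecMul x A B).symm
  rw [subApply, h, Submodule.map_comp]
  rfl

lemma subApply_comp (v : ℕ) (A B : Matrix (Fin v) (Fin v) (ZMod 2)) :
    (subApply v B) ∘ (subApply v A) = subApply v (A * B) :=
  funext fun U => (subApply_mul v A B U).symm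

/-- The automorphism group of `D`, as a subgroup of `GL(v, F_2)`. -/
def Aut (v : ℕ) (D : Set (Submodule (ZMod 2) (BinVec v))) :
    Subgroup (GL (Fin v) (ZMod 2)) where
  carrier := {A | IsAutM v A.val D}
  one_mem' := by
    show subApply v (1 : GL (Fin v) (ZMod 2)).val '' D = D
    rw [show (1 : GL (Fin v) (ZMod 2)).val = 1 from rfl]
    rw [show subApply v (1 : Matrix (Fin v) (Fin v) (ZMod 2)) = id from
      funext (subApply_one v), Set.image_id]
  mul_mem' := by
    intro A B hA hB
    show subApply v (A * B : GL (Fin v) (ZMod 2)).val '' D = D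
    rw [show (A * B : GL (Fin v) (ZMod 2)).val = A.val * B.val from rfl]
    rw [← subApply_comp, Set.image_comp]
    rw [show subApply v A.val '' D = D from hA]
    exact hB
  inv_mem' := by
    intro A hA
    show subApply v (A⁻¹ : GL (Fin v) (ZMod 2)).val '' D = D
    conv_lhs => rw [← show subApply v A.val '' D = D from hA]
    rw [← Set.image_comp, subApply_comp]
    rw [show A.val * (A⁻¹ : GL (Fin v) (ZMod 2)).val = 1 from A.mul_inv]
    rw [show subApply v (1 : Matrix (Fin v) (Fin v) (ZMod 2)) = id from
      funext (subApply_one v), Set.image_id]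

/-- `pairSwap s i` swaps `2m ↔ 2m+1` for `i < 2s` and fixes `i` otherwise. -/
def pairSwap (s i : ℕ) : ℕ :=
  if i < 2 * s then (if i % 2 = 0 then i + 1 else i - 1) else i

/-- The block diagonal matrix `A_{v,s}`: `s` consecutive blocks `[[0,1],[1,0]]`
on the diagonal, followed by a `(v-2s)×(v-2s)` identity matrix. -/
def Avs (v s : ℕ) : Matrix (Fin v) (Fin v) (ZMod 2) :=
  Matrix.of fun i j => if (j : ℕ) = pairSwap s (i : ℕ) then 1 else 0

/-- `M` and `N` are conjugate in `GL(v, F_2)`. -/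
def ConjGL (v : ℕ) (M N : Matrix (Fin v) (Fin v) (ZMod 2)) : Prop :=
  ∃ P : GL (Fin v) (ZMod 2), M = P.val * N * (P⁻¹).val

/-- The orbit of a subspace `P` under the subgroup generated by `A`. -/
def orbitOf (v : ℕ) (A : GL (Fin v) (ZMod 2)) (P : Submodule (ZMod 2) (BinVec v)) :
    Set (Submodule (ZMod 2) (BinVec v)) :=
  {Q | ∃ g ∈ Subgroup.zpowers A, Q = subApply v (g : GL (Fin v) (ZMod 2)).val P}

/-- The block diagonal matrix consisting of the 3×3 upper-triangular Jordan block
(1s on diagonal and superdiagonal) followed by the 4×4 upper-triangular Jordan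
block (1s on diagonal and superdiagonal). -/
def JordanJ3J4 : Matrix (Fin 7) (Fin 7) (ZMod 2) :=
  Matrix.of fun i j =>
    if j = i then 1 else if (j : ℕ) = (i : ℕ) + 1 ∧ (i : ℕ) ≠ 2 then 1 else 0

/-- The block diagonal matrix consisting of `k` consecutive 2×2 blocks
`[[0,1],[1,1]]` on the diagonal, followed by a `(v-2k)×(v-2k)` identity matrix. -/
def Bvk (v k : ℕ) : Matrix (Fin v) (Fin v) (ZMod 2) :=
  Matrix.of fun i j =>
    if (i : ℕ) < 2 * k then
      (if (i : ℕ) % 2 = 0 then (if (j : ℕ) = (i : ℕ) + 1 then 1 else 0)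
       else (if (j : ℕ) = (i : ℕ) - 1 ∨ (j : ℕ) = (i : ℕ) then 1 else 0))
    else if i = j then 1 else 0


/-!
Let `F` be the fixed space of the involution `A` and `f = dim F`. Over `𝔽₂` we have
`(A - 1)² = 0`, so `rank (A - 1) ≤ 3`, i.e. `f ≥ 4`, and `f < 7` as `A ≠ 1`.
A fixed block not contained in `F` meets `F` in a plane, so it has `4` points outside `F`;
conversely each `x ∉ F` lies in exactly one fixed block, the block through `⟨x, xA⟩`. Likewise
each ordered pair of distinct nonzero vectors of `F` spans a fixed plane, hence lies in exactly
one fixed block. With `a`, `b` the numbers of fixed blocks inside and not inside `F`, double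
counting gives `2⁷ - 2^f = 4b` and `(2^f - 1)(2^f - 2) = 42a + 6b`, which have no solution for
`f = 5, 6`. So `rank (A - 1) = 3`, and an involution `A` of `𝔽₂^v` with `rank (A - 1) = s` is
conjugate to `A_{v,s}`: pick `u₁, …, u_s` spanning a complement of `ker (A - 1)` and
`w₁, …, w_{v-2s}` spanning a complement of `im (A - 1)` in `ker (A - 1)`; in the basis
`u₁, Au₁, …, u_s, Au_s, w₁, …` the matrix of `A` is `A_{v,s}`.
-/

open Module Finset Matrix

section LinearAlgebra

variable {K V : Type*} [Field K] [AddCommGroup V] [Module K V]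

lemma finrank_le_two_mul_finrank_inf_ker [FiniteDimensional K V] {f : V →ₗ[K] V}
    (hf : f ∘ₗ f = 0) {B : Submodule K V} (hB : ∀ x ∈ B, f x ∈ B) :
    finrank K B ≤ 2 * finrank K ↥(B ⊓ LinearMap.ker f) := by
  set g := f.restrict hB
  have hg : LinearMap.range g ≤ LinearMap.ker g := by
    rintro _ ⟨x, rfl⟩
    exact Subtype.ext (LinearMap.congr_fun hf x)
  have hker : finrank K (LinearMap.ker g) = finrank K ↥(B ⊓ LinearMap.ker f) := by
    rw [← Submodule.finrank_map_subtype_eq, LinearMap.ker_restrict, Submodule.map_comap_subtype]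
  have := g.finrank_range_add_finrank_ker
  have := Submodule.finrank_mono hg
  omega

lemma exists_isCompl_ker_and_range_sup_eq_ker [FiniteDimensional K V] {N : V →ₗ[K] V}
    (hRK : LinearMap.range N ≤ LinearMap.ker N) :
    ∃ U W : Submodule K V, IsCompl (LinearMap.ker N) U ∧ W ≤ LinearMap.ker N ∧
      LinearMap.range N ⊔ W = LinearMap.ker N ∧ finrank K U = finrank K (LinearMap.range N) ∧
      finrank K W + 2 * finrank K (LinearMap.range N) = finrank K V := by
  have hN := N.finrank_range_add_finrank_ker
  obtain ⟨U, hKU⟩ := (LinearMap.ker N).exists_isCompl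
  have hU := Submodule.finrank_add_eq_of_isCompl hKU
  obtain ⟨C, hRC⟩ := (LinearMap.range N).exists_isCompl
  have hRW : LinearMap.range N ⊔ C ⊓ LinearMap.ker N = LinearMap.ker N := by
    rw [← sup_inf_assoc_of_le _ hRK, hRC.sup_eq_top, top_inf_eq]
  have hW := Submodule.finrank_sup_add_finrank_inf_eq (LinearMap.range N) (C ⊓ LinearMap.ker N)
  rw [hRW, (hRC.disjoint.mono_right inf_le_left).eq_bot, finrank_bot] at hW
  exact ⟨U, C ⊓ LinearMap.ker N, hKU, inf_le_right, hRW, by omega, by omega⟩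

lemma eq_top_of_map_le_self {N : V →ₗ[K] V} {S U W : Submodule K V} (hS : S.map N ≤ S)
    (hKU : LinearMap.ker N ⊔ U = ⊤) (hRW : LinearMap.range N ⊔ W = LinearMap.ker N)
    (hUS : U ≤ S) (hWS : W ≤ S) : S = ⊤ := by
  have hRS : LinearMap.range N ≤ S := by
    rintro _ ⟨x, rfl⟩
    obtain ⟨y, hy, z, hz, rfl⟩ := Submodule.mem_sup.1 (hKU ▸ Submodule.mem_top : x ∈ _ ⊔ U)
    rw [map_add, LinearMap.mem_ker.1 hy, zero_add]
    exact hS (Submodule.mem_map_of_mem (hUS hz))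
  rw [eq_top_iff, ← hKU, ← hRW]
  exact sup_le (sup_le hRS hWS) hUS

end LinearAlgebra

lemma le_of_forall_basis_mem {K V ι : Type*} [Semiring K] [AddCommMonoid V] [Module K V]
    {U S : Submodule K V} (b : Basis ι K U) (h : ∀ i, (b i : V) ∈ S) : U ≤ S := by
  rw [← U.range_subtype, LinearMap.range_eq_map, ← b.span_eq, Submodule.map_span,
    Submodule.span_le]
  rintro _ ⟨_, ⟨i, rfl⟩, rfl⟩
  exact h i

lemma finrank_span_pair_eq_two {V : Type*} [AddCommGroup V] [Module (ZMod 2) V] {x y : V}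
    (hx : x ≠ 0) (hy : y ≠ 0) (hxy : x ≠ y) :
    finrank (ZMod 2) (Submodule.span (ZMod 2) {x, y}) = 2 := by
  have hli : LinearIndependent (ZMod 2) ![x, y] := by
    refine LinearIndependent.pair_iff.2 fun s t hst => ?_
    have hneg : -y = y := by rw [← neg_one_smul (ZMod 2) y]; exact one_smul _ y
    have h01 : ∀ c : ZMod 2, c = 0 ∨ c = 1 := by decide
    rcases h01 s with rfl | rfl <;> rcases h01 t with rfl | rfl
    · exact ⟨rfl, rfl⟩
    all_goals simp only [zero_smul, one_smul, zero_add, add_zero] at hst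
    · exact absurd hst hy
    · exact absurd hst hx
    · exact absurd (by rw [eq_neg_of_add_eq_zero_left hst, hneg]) hxy
  have hrange : Set.range ![x, y] = {x, y} := by
    rw [Matrix.range_cons, Matrix.range_cons, Matrix.range_empty, Set.union_empty,
      Set.singleton_union]
  have := finrank_span_eq_card hli
  rwa [hrange, Fintype.card_fin] at this

section Involution

variable {n : Type*} [Fintype n] [DecidableEq n] {M : Matrix n n (ZMod 2)}

lemma sub_one_mul_self_eq_zero (hM : M * M = 1) : (M - 1) * (M - 1) = 0 := by
  have h2 : (2 : ZMod 2) = 0 := rfl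
  calc (M - 1) * (M - 1) = (2 : ZMod 2) • (1 - M) := by
        rw [two_smul]; noncomm_ring; rw [hM]; abel
    _ = 0 := by rw [h2, zero_smul]

lemma rank_sub_one_ne_zero (hM1 : M ≠ 1) : (M - 1).rank ≠ 0 := by
  intro h
  rw [Matrix.rank, Submodule.finrank_eq_zero, LinearMap.range_eq_bot, ← Matrix.toLin'_apply',
    LinearEquiv.map_eq_zero_iff, sub_eq_zero] at h
  exact hM1 h

end Involution

section Counting

open scoped Classical

section
variable {V : Type*} [AddCommGroup V] [Module (ZMod 2) V] [Fintype V]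

lemma card_filter_mem_eq_two_pow (S : Submodule (ZMod 2) V) :
    #{x | x ∈ S} = 2 ^ finrank (ZMod 2) S := by
  rw [← Fintype.card_subtype, Module.card_eq_pow_finrank (K := ZMod 2), ZMod.card]

lemma card_filter_notMem (S : Submodule (ZMod 2) V) :
    #{x | x ∉ S} = 2 ^ finrank (ZMod 2) V - 2 ^ finrank (ZMod 2) S := by
  have h := Finset.card_filter_add_card_filter_not (s := Finset.univ) (· ∈ S)
  rw [card_filter_mem_eq_two_pow, Finset.card_univ, Module.card_eq_pow_finrank (K := ZMod 2),
    ZMod.card] at h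
  omega

lemma card_filter_mem_and_notMem (S T : Submodule (ZMod 2) V) :
    #{x | x ∈ S ∧ x ∉ T} = 2 ^ finrank (ZMod 2) S - 2 ^ finrank (ZMod 2) ↥(S ⊓ T) := by
  have h := Finset.card_filter_add_card_filter_not (s := {x | x ∈ S}) (· ∈ T)
  simp only [Finset.filter_filter, ← Submodule.mem_inf, card_filter_mem_eq_two_pow] at h
  omega

noncomputable def pairsIn (S : Submodule (ZMod 2) V) : Finset (V × V) :=
  (({x | x ∈ S} : Finset V).erase 0).offDiag

lemma mem_pairsIn {S : Submodule (ZMod 2) V} {p : V × V} :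
    p ∈ pairsIn S ↔ (p.1 ∈ S ∧ p.1 ≠ 0) ∧ (p.2 ∈ S ∧ p.2 ≠ 0) ∧ p.1 ≠ p.2 := by
  simp [pairsIn, and_comm]

lemma card_pairsIn (S : Submodule (ZMod 2) V) :
    #(pairsIn S) = (2 ^ finrank (ZMod 2) S - 1) * (2 ^ finrank (ZMod 2) S - 2) := by
  rw [pairsIn, Finset.offDiag_card, Finset.card_erase_of_mem (by simp),
    card_filter_mem_eq_two_pow, ← Nat.mul_sub_one, Nat.sub_sub]

end

variable {v : ℕ} {D : Set (Submodule (ZMod 2) (BinVec v))} {M : Matrix (Fin v) (Fin v) (ZMod 2)}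

def fixedSpace (M : Matrix (Fin v) (Fin v) (ZMod 2)) : Submodule (ZMod 2) (BinVec v) :=
  LinearMap.ker (M - 1).vecMulLinear

lemma mem_fixedSpace {x : BinVec v} : x ∈ fixedSpace M ↔ x ᵥ* M = x := by
  simp [fixedSpace, sub_eq_zero]

-- Blocks are moved by row vectors (`vecMul`), conjugacy is read off column vectors (`mulVec`):
-- the rank of `M - 1`, invariant under transposition, connects the two.
lemma finrank_fixedSpace_add_rank (M : Matrix (Fin v) (Fin v) (ZMod 2)) :
    finrank (ZMod 2) (fixedSpace M) + (M - 1).rank = v := by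
  rw [← Matrix.rank_transpose, Matrix.rank, Matrix.mulVecLin_transpose, fixedSpace, add_comm,
    LinearMap.finrank_range_add_finrank_ker, Module.finrank_fin_fun]

lemma vecMul_vecMul_self (hM : M * M = 1) (x : BinVec v) : x ᵥ* M ᵥ* M = x := by
  rw [Matrix.vecMul_vecMul, hM, Matrix.vecMul_one]

noncomputable def fixedBlocks (D : Set (Submodule (ZMod 2) (BinVec v)))
    (M : Matrix (Fin v) (Fin v) (ZMod 2)) : Finset (Submodule (ZMod 2) (BinVec v)) :=
  {B | B ∈ D ∧ subApply v M B = B}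

lemma mem_fixedBlocks {B : Submodule (ZMod 2) (BinVec v)} :
    B ∈ fixedBlocks D M ↔ B ∈ D ∧ subApply v M B = B := by
  simp [fixedBlocks]

lemma vecMul_mem_of_subApply_eq {B : Submodule (ZMod 2) (BinVec v)} (hB : subApply v M B = B)
    {x : BinVec v} (hx : x ∈ B) : x ᵥ* M ∈ B :=
  hB ▸ Submodule.mem_map_of_mem (f := M.vecMulLinear) hx

lemma subApply_span {s : Set (BinVec v)} (hs : (· ᵥ* M) '' s = s) :
    subApply v M (Submodule.span (ZMod 2) s) = Submodule.span (ZMod 2) s := by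
  rw [subApply, Submodule.map_span]
  exact congrArg _ hs

lemma span_pair_vecMul_le_iff {B : Submodule (ZMod 2) (BinVec v)} (hB : subApply v M B = B)
    {x : BinVec v} : Submodule.span (ZMod 2) {x, x ᵥ* M} ≤ B ↔ x ∈ B := by
  rw [Submodule.span_le, Set.pair_subset_iff]
  exact ⟨And.left, fun hx => ⟨hx, vecMul_mem_of_subApply_eq hB hx⟩⟩

lemma existsUnique_mem_fixedBlocks_le (hD : IsSteinerTriple v D) (hAut : IsAutM v M D)
    {T : Submodule (ZMod 2) (BinVec v)} (hT : finrank (ZMod 2) T = 2)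
    (hTM : subApply v M T = T) : ∃! B, B ∈ fixedBlocks D M ∧ T ≤ B := by
  obtain ⟨B, ⟨hBD, hTB⟩, huniq⟩ := hD.2 T hT
  have hMB : subApply v M B ∈ D := hAut ▸ Set.mem_image_of_mem _ hBD
  have hfix : subApply v M B = B := huniq _ ⟨hMB, hTM ▸ Submodule.map_mono hTB⟩
  exact ⟨B, ⟨mem_fixedBlocks.2 ⟨hBD, hfix⟩, hTB⟩,
    fun B' ⟨hB', hTB'⟩ => huniq B' ⟨(mem_fixedBlocks.1 hB').1, hTB'⟩⟩

lemma card_filter_fixedBlocks_le (hD : IsSteinerTriple v D) (hAut : IsAutM v M D)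
    {T : Submodule (ZMod 2) (BinVec v)} (hT : finrank (ZMod 2) T = 2)
    (hTM : subApply v M T = T) : #{B ∈ fixedBlocks D M | T ≤ B} = 1 := by
  rw [fixedBlocks, Finset.filter_filter]
  convert (Fintype.existsUnique_iff_card_one _).1 (existsUnique_mem_fixedBlocks_le hD hAut hT hTM)
  rw [mem_fixedBlocks]

lemma finrank_inf_fixedSpace_eq_two (hD : IsSteinerTriple v D) (hM : M * M = 1)
    {B : Submodule (ZMod 2) (BinVec v)} (hB : B ∈ fixedBlocks D M) (hBF : ¬B ≤ fixedSpace M) :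
    finrank (ZMod 2) ↥(B ⊓ fixedSpace M) = 2 := by
  obtain ⟨hBD, hBM⟩ := mem_fixedBlocks.1 hB
  have hB3 : finrank (ZMod 2) B = 3 := hD.1 B hBD
  have hsq : (M - 1).vecMulLinear ∘ₗ (M - 1).vecMulLinear = 0 := LinearMap.ext fun x => by
    simp only [LinearMap.comp_apply, Matrix.vecMulLinear_apply, Matrix.vecMul_vecMul,
      sub_one_mul_self_eq_zero hM, Matrix.vecMul_zero, LinearMap.zero_apply]
  have hinv : ∀ x ∈ B, (M - 1).vecMulLinear x ∈ B := fun x hx => by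
    simpa [Matrix.vecMul_sub] using B.sub_mem (vecMul_mem_of_subApply_eq hBM hx) hx
  have hge : 3 ≤ 2 * finrank (ZMod 2) ↥(B ⊓ fixedSpace M) :=
    hB3 ▸ finrank_le_two_mul_finrank_inf_ker hsq hinv
  have hle : finrank (ZMod 2) ↥(B ⊓ fixedSpace M) ≤ 3 :=
    hB3 ▸ Submodule.finrank_mono inf_le_left
  have hne : finrank (ZMod 2) ↥(B ⊓ fixedSpace M) ≠ 3 := fun h3 =>
    hBF (inf_eq_left.1 (Submodule.eq_of_le_of_finrank_eq inf_le_left (h3.trans hB3.symm)))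
  omega

lemma card_filter_fixedBlocks_mem (hD : IsSteinerTriple v D) (hAut : IsAutM v M D)
    (hM : M * M = 1) {x : BinVec v} (hx : x ∉ fixedSpace M) :
    #{B ∈ {B ∈ fixedBlocks D M | ¬B ≤ fixedSpace M} | x ∈ B} = 1 := by
  have hx0 : x ≠ 0 := fun h => hx (h ▸ (fixedSpace M).zero_mem)
  have hxM : x ≠ x ᵥ* M := fun h => hx (mem_fixedSpace.2 h.symm)
  have hxM0 : x ᵥ* M ≠ 0 := fun h => hx0 (by rw [← vecMul_vecMul_self hM x, h, Matrix.zero_vecMul])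
  have hT := finrank_span_pair_eq_two hx0 hxM0 hxM
  have hTM : subApply v M (Submodule.span (ZMod 2) {x, x ᵥ* M}) =
      Submodule.span (ZMod 2) {x, x ᵥ* M} :=
    subApply_span (by rw [Set.image_pair, vecMul_vecMul_self hM, Set.pair_comm])
  rw [← card_filter_fixedBlocks_le hD hAut hT hTM, Finset.filter_filter]
  congr 1
  refine Finset.filter_congr fun B hB => ?_
  rw [span_pair_vecMul_le_iff (mem_fixedBlocks.1 hB).2]
  exact ⟨And.right, fun hxB => ⟨fun hBF => hx (hBF hxB), hxB⟩⟩

lemma card_notMem_fixedSpace (hD : IsSteinerTriple v D) (hAut : IsAutM v M D)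
    (hM : M * M = 1) :
    #{x | x ∉ fixedSpace M} = 4 * #{B ∈ fixedBlocks D M | ¬B ≤ fixedSpace M} := by
  have h := Finset.card_mul_eq_card_mul (s := {x | x ∉ fixedSpace M})
    (t := {B ∈ fixedBlocks D M | ¬B ≤ fixedSpace M}) (fun x B => x ∈ B) (m := 1) (n := 4)
    (fun x hx => card_filter_fixedBlocks_mem hD hAut hM (Finset.mem_filter.1 hx).2)
    (fun B hB => ?_)
  · omega
  obtain ⟨hB, hBF⟩ := Finset.mem_filter.1 hB
  rw [Finset.bipartiteBelow, Finset.filter_filter]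
  simp_rw [and_comm (a := _ ∉ fixedSpace M)]
  rw [card_filter_mem_and_notMem, hD.1 B (mem_fixedBlocks.1 hB).1,
    finrank_inf_fixedSpace_eq_two hD hM hB hBF]
  rfl

lemma card_filter_fixedBlocks_pair_mem (hD : IsSteinerTriple v D) (hAut : IsAutM v M D)
    {p : BinVec v × BinVec v} (hp : p ∈ pairsIn (fixedSpace M)) :
    #{B ∈ fixedBlocks D M | p.1 ∈ B ∧ p.2 ∈ B} = 1 := by
  obtain ⟨⟨h1F, h10⟩, ⟨h2F, h20⟩, h12⟩ := mem_pairsIn.1 hp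
  have hTM : subApply v M (Submodule.span (ZMod 2) {p.1, p.2}) =
      Submodule.span (ZMod 2) {p.1, p.2} :=
    subApply_span (by rw [Set.image_pair, mem_fixedSpace.1 h1F, mem_fixedSpace.1 h2F])
  rw [← card_filter_fixedBlocks_le hD hAut (finrank_span_pair_eq_two h10 h20 h12) hTM]
  exact congrArg _ (Finset.filter_congr fun B _ => (Submodule.span_le.trans Set.pair_subset_iff).symm)

lemma card_pairsIn_fixedSpace (hD : IsSteinerTriple v D) (hAut : IsAutM v M D)
    (hM : M * M = 1) :
    #(pairsIn (fixedSpace M)) = 42 * #{B ∈ fixedBlocks D M | B ≤ fixedSpace M} +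
      6 * #{B ∈ fixedBlocks D M | ¬B ≤ fixedSpace M} := by
  have h := Finset.sum_card_bipartiteAbove_eq_sum_card_bipartiteBelow
    (s := pairsIn (fixedSpace M)) (t := fixedBlocks D M) (r := fun p B => p.1 ∈ B ∧ p.2 ∈ B)
  have hbelow : ∀ B ∈ fixedBlocks D M, #({p ∈ pairsIn (fixedSpace M) | p.1 ∈ B ∧ p.2 ∈ B}) =
      #(pairsIn (B ⊓ fixedSpace M)) := fun B _ => by
    congr 1
    ext p
    simp only [Finset.mem_filter, mem_pairsIn, Submodule.mem_inf]
    tauto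
  have hin : ∀ B ∈ {B ∈ fixedBlocks D M | B ≤ fixedSpace M},
      #(pairsIn (B ⊓ fixedSpace M)) = 42 := fun B hB => by
    obtain ⟨hB, hBF⟩ := Finset.mem_filter.1 hB
    rw [inf_eq_left.2 hBF, card_pairsIn, hD.1 B (mem_fixedBlocks.1 hB).1]
    rfl
  have hout : ∀ B ∈ {B ∈ fixedBlocks D M | ¬B ≤ fixedSpace M},
      #(pairsIn (B ⊓ fixedSpace M)) = 6 := fun B hB => by
    obtain ⟨hB, hBF⟩ := Finset.mem_filter.1 hB
    rw [card_pairsIn, finrank_inf_fixedSpace_eq_two hD hM hB hBF]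
    rfl
  simp only [Finset.bipartiteAbove, Finset.bipartiteBelow] at h
  rw [Finset.sum_congr rfl fun p hp => card_filter_fixedBlocks_pair_mem hD hAut hp,
    Finset.sum_congr rfl hbelow, ← Finset.sum_filter_add_sum_filter_not _ (· ≤ fixedSpace M),
    Finset.sum_congr rfl hin, Finset.sum_congr rfl hout] at h
  simpa [mul_comm] using h

lemma rank_sub_one_eq_three {D : Set (Submodule (ZMod 2) (BinVec 7))}
    {M : Matrix (Fin 7) (Fin 7) (ZMod 2)} (hD : IsSteinerTriple 7 D) (hAut : IsAutM 7 M D)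
    (hM : M * M = 1) (hM1 : M ≠ 1) : (M - 1).rank = 3 := by
  have hsum := finrank_fixedSpace_add_rank M
  have hsq := Matrix.rank_add_rank_le_card_of_mul_eq_zero (sub_one_mul_self_eq_zero hM)
  have hr0 := rank_sub_one_ne_zero hM1
  have hout := card_notMem_fixedSpace hD hAut hM
  have hpairs := card_pairsIn_fixedSpace hD hAut hM
  rw [card_filter_notMem, Module.finrank_fin_fun] at hout
  rw [card_pairsIn] at hpairs
  rw [Fintype.card_fin] at hsq
  obtain ⟨f, hf⟩ : ∃ f, finrank (ZMod 2) (fixedSpace M) = f := ⟨_, rfl⟩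
  rw [hf] at hsum hout hpairs
  have : 4 ≤ f := by omega
  have : f ≤ 6 := by omega
  -- `f = 5` and `f = 6` would need `42 a = 786` and `42 a = 3810` respectively.
  interval_cases f <;> omega

end Counting

section Conjugacy

variable {v s : ℕ}

lemma pairSwap_pairSwap (s i : ℕ) : pairSwap s (pairSwap s i) = i := by
  unfold pairSwap
  split_ifs <;> omega

lemma pairSwap_lt (hs : 2 * s ≤ v) {i : ℕ} (hi : i < v) : pairSwap s i < v := by
  unfold pairSwap
  split_ifs <;> omega

lemma conjGL_of_toMatrix_eq {M N : Matrix (Fin v) (Fin v) (ZMod 2)}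
    (b : Basis (Fin v) (ZMod 2) (BinVec v)) (h : LinearMap.toMatrix b b M.mulVecLin = N) :
    ConjGL v M N := by
  let e := Pi.basisFun (ZMod 2) (Fin v)
  refine ⟨⟨e.toMatrix b, b.toMatrix e, e.toMatrix_mul_toMatrix_flip b,
    b.toMatrix_mul_toMatrix_flip e⟩, ?_⟩
  show M = e.toMatrix b * N * b.toMatrix e
  rw [← h, basis_toMatrix_mul_linearMap_toMatrix_mul_basis_toMatrix,
    LinearMap.toMatrix_eq_toMatrix', ← Matrix.toLin'_apply', LinearMap.toMatrix'_toLin']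

lemma toMatrix_eq_Avs (hs : 2 * s ≤ v) {M : Matrix (Fin v) (Fin v) (ZMod 2)}
    (b : Basis (Fin v) (ZMod 2) (BinVec v)) (f : ℕ → BinVec v) (hb : ∀ j : Fin v, b j = f j)
    (hf : ∀ n, M *ᵥ f n = f (pairSwap s n)) :
    LinearMap.toMatrix b b M.mulVecLin = Avs v s := by
  ext i j
  have hbj : M *ᵥ b j = b ⟨pairSwap s j, pairSwap_lt hs j.2⟩ := by rw [hb, hb, hf]
  rw [LinearMap.toMatrix_apply, Matrix.mulVecLin_apply, hbj, b.repr_self, Finsupp.single_apply,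
    Avs, Matrix.of_apply]
  congr 1
  rw [← Fin.val_inj]
  exact propext ⟨fun h => by rw [← h, pairSwap_pairSwap],
    fun h => by simp only [h, pairSwap_pairSwap]⟩

-- `u₀, M u₀, u₁, M u₁, …, w₀, w₁, …`, indexed by `ℕ` so that `pairSwap` acts on the indices;
-- the entries at indices `≥ v` play no role.
def pairedFamily (M : Matrix (Fin v) (Fin v) (ZMod 2)) (s : ℕ) (u w : ℕ → BinVec v) (n : ℕ) :
    BinVec v :=
  if n < 2 * s then (if n % 2 = 0 then u (n / 2) else M *ᵥ u (n / 2)) else w (n - 2 * s)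

lemma mulVec_pairedFamily {M : Matrix (Fin v) (Fin v) (ZMod 2)} (hM : M * M = 1)
    {u w : ℕ → BinVec v} (hw : ∀ k, M *ᵥ w k = w k) (n : ℕ) :
    M *ᵥ pairedFamily M s u w n = pairedFamily M s u w (pairSwap s n) := by
  unfold pairedFamily pairSwap
  by_cases h : n < 2 * s
  · rcases Nat.mod_two_eq_zero_or_one n with h2 | h2
    · simp [h, h2, show n + 1 < 2 * s by omega, show (n + 1) % 2 = 1 by omega,
        show (n + 1) / 2 = n / 2 by omega]
    · simp [h, h2, show n - 1 < 2 * s by omega, show (n - 1) % 2 = 0 by omega,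
        show (n - 1) / 2 = n / 2 by omega, Matrix.mulVec_mulVec, hM]
  · simp [h, hw]

lemma top_le_span_pairedFamily {M : Matrix (Fin v) (Fin v) (ZMod 2)} (hM : M * M = 1)
    (h2s : 2 * s ≤ v) {U W : Submodule (ZMod 2) (BinVec v)}
    (hKU : LinearMap.ker (M - 1).mulVecLin ⊔ U = ⊤)
    (hRW : LinearMap.range (M - 1).mulVecLin ⊔ W = LinearMap.ker (M - 1).mulVecLin)
    (bU : Basis (Fin s) (ZMod 2) U) (bW : Basis (Fin (v - 2 * s)) (ZMod 2) W)
    {u w : ℕ → BinVec v} (hu : ∀ i : Fin s, u i = bU i) (hw : ∀ k : Fin (v - 2 * s), w k = bW k)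
    (hwM : ∀ k, M *ᵥ w k = w k) :
    ⊤ ≤ Submodule.span (ZMod 2) (Set.range fun j : Fin v => pairedFamily M s u w j) := by
  set S := Submodule.span (ZMod 2) (Set.range fun j : Fin v => pairedFamily M s u w j)
  have hfS : ∀ n < v, pairedFamily M s u w n ∈ S := fun n hn =>
    Submodule.subset_span ⟨⟨n, hn⟩, rfl⟩
  have hSM : S.map (M - 1).mulVecLin ≤ S := by
    rw [Submodule.map_span_le]
    rintro _ ⟨j, rfl⟩
    rw [Matrix.mulVecLin_apply, Matrix.sub_mulVec, Matrix.one_mulVec, mulVec_pairedFamily hM hwM]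
    exact S.sub_mem (hfS _ (pairSwap_lt h2s j.2)) (hfS j j.2)
  have hUS : U ≤ S := le_of_forall_basis_mem bU fun i => by
    simpa [pairedFamily, hu, show 2 * (i : ℕ) < 2 * s by omega] using hfS (2 * i) (by omega)
  have hWS : W ≤ S := le_of_forall_basis_mem bW fun k => by
    simpa [pairedFamily, hw] using hfS (2 * s + k) (by omega)
  exact (eq_top_of_map_le_self hSM hKU hRW hUS hWS).ge

theorem conjGL_Avs_of_rank_sub_one {M : Matrix (Fin v) (Fin v) (ZMod 2)} (hM : M * M = 1)
    (hs : (M - 1).rank = s) : ConjGL v M (Avs v s) := by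
  set N := (M - 1).mulVecLin
  have hRK : LinearMap.range N ≤ LinearMap.ker N := by
    rintro _ ⟨x, rfl⟩
    simp only [N, LinearMap.mem_ker, Matrix.mulVecLin_apply, Matrix.mulVec_mulVec,
      sub_one_mul_self_eq_zero hM, Matrix.zero_mulVec]
  obtain ⟨U, W, hKU, hWK, hRW, hU, hW⟩ := exists_isCompl_ker_and_range_sup_eq_ker hRK
  have hR : finrank (ZMod 2) (LinearMap.range N) = s := hs
  rw [hR] at hU
  rw [hR, Module.finrank_fin_fun] at hW
  let bU := Module.finBasisOfFinrankEq (ZMod 2) U hU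
  let bW := Module.finBasisOfFinrankEq (ZMod 2) W (show _ = v - 2 * s by omega)
  let u : ℕ → BinVec v := fun i => if h : i < s then bU ⟨i, h⟩ else 0
  let w : ℕ → BinVec v := fun k => if h : k < v - 2 * s then bW ⟨k, h⟩ else 0
  have hwM : ∀ k, M *ᵥ w k = w k := fun k => by
    have hwK : w k ∈ LinearMap.ker N := by
      unfold w
      split_ifs
      exacts [hWK (bW _).2, Submodule.zero_mem _]
    rwa [LinearMap.mem_ker, Matrix.mulVecLin_apply, Matrix.sub_mulVec, Matrix.one_mulVec,
      sub_eq_zero] at hwK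
  have hspan := top_le_span_pairedFamily hM (by omega) hKU.sup_eq_top hRW bU bW
    (u := u) (w := w) (fun i => dif_pos i.2) (fun k => dif_pos k.2) hwM
  let b := basisOfTopLeSpanOfCardEqFinrank _ hspan (by simp)
  exact conjGL_of_toMatrix_eq b
    (toMatrix_eq_Avs (by omega) b _ (fun j => by simp [b]) (mulVec_pairedFamily (u := u) hM hwM))

end Conjugacy

/-- an automorphism of order 2 of a binary q-analog of the Fano
plane is conjugate to `A_{7,3}`. -/
theorem stmt8 (D : Set (Submodule (ZMod 2) (BinVec 7))) (hD : IsSteinerTriple 7 D)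
    (A : GL (Fin 7) (ZMod 2)) (hAut : IsAutM 7 A.val D)
    (hA2 : A ^ 2 = 1) (hA1 : A ≠ 1) :
    ConjGL 7 A.val (Avs 7 3) := by
  have hM : A.val * A.val = 1 := by rw [← Units.val_mul, ← sq, hA2, Units.val_one]
  have hM1 : A.val ≠ 1 := fun h => hA1 (Units.ext h)
  exact conjGL_Avs_of_rank_sub_one hM (rank_sub_one_eq_three hD hAut hM hM1)
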